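/- arXiv:2405.15767 — 3 statements merged into one kernel-verified Lean document; each statement's English description precedes it below -/
import Mathlib

section
/- Let F : P₂(ℝ^d) → ℝ be differentiable and convex and λ > 0. Define L(μ) = F(μ) + λ Ent(μ) and suppose μ* satisfies the first-order condition μ*(dx) ∝ exp(−(1/λ)(δF(μ*)/δμ)(x)) dx. Then for every μ ∈ P₂(ℝ^d) with finite entropy, λ KL(μ ∥ μ*) ≤ L(μ) − L(μ*). -/
open MeasureTheory

/-- A probability measure on `ℝ^d` with finite second moment. -/
def IsP2 {d : ℕ} (μ : Measure (EuclideanSpace ℝ (Fin d))) : Prop :=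
  IsProbabilityMeasure μ ∧ Integrable (fun x => ‖x‖ ^ 2) μ

/-- Negative differential entropy w.r.t. Lebesgue measure. -/
noncomputable def negEnt {d : ℕ} (ρ : Measure (EuclideanSpace ℝ (Fin d))) : ℝ :=
  ∫ x, Real.log (ρ.rnDeriv volume x).toReal ∂ρ

/-- KL divergence. -/
noncomputable def klDiv' {d : ℕ} (μ ν : Measure (EuclideanSpace ℝ (Fin d))) : ℝ :=
  ∫ x, Real.log (μ.rnDeriv ν x).toReal ∂μ

/-- Entropy sandwich: if `μ*` satisfies the first-order condition
`μ*(dx) ∝ exp(-(1/λ) δF(μ*)(x)) dx` for the convex functional `F`, then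
`λ KL(μ‖μ*) ≤ L(μ) - L(μ*)` for `L(μ) = F(μ) + λ Ent(μ)`. -/
theorem stmt7 {d : ℕ}
    (F : Measure (EuclideanSpace ℝ (Fin d)) → ℝ)
    (δF : Measure (EuclideanSpace ℝ (Fin d)) → EuclideanSpace ℝ (Fin d) → ℝ)
    (hconv : ∀ μ μ' : Measure (EuclideanSpace ℝ (Fin d)), IsP2 μ → IsP2 μ' →
      F μ + (∫ x, δF μ x ∂μ' - ∫ x, δF μ x ∂μ) ≤ F μ')
    (lam : ℝ) (hlam : 0 < lam)
    (μstar : Measure (EuclideanSpace ℝ (Fin d))) (hμstar : IsP2 μstar)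
    (Z : ℝ) (hZpos : 0 < Z)
    (hZ : Z = ∫ x, Real.exp (-(1 / lam) * δF μstar x))
    (hfoc : μstar = volume.withDensity
      (fun x => ENNReal.ofReal (Real.exp (-(1 / lam) * δF μstar x) / Z)))
    (μ : Measure (EuclideanSpace ℝ (Fin d))) (hμ : IsP2 μ)
    (hacμ : μ ≪ volume)
    (hEntμ : Integrable (fun x => Real.log (μ.rnDeriv volume x).toReal) μ)
    (hEntstar : Integrable (fun x => Real.log (μstar.rnDeriv volume x).toReal) μstar)
    (hKLint : Integrable (fun x => Real.log (μ.rnDeriv μstar x).toReal) μ)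
    (hδFint : Integrable (δF μstar) μ) (hδFintstar : Integrable (δF μstar) μstar) :
    lam * klDiv' μ μstar ≤ (F μ + lam * negEnt μ) - (F μstar + lam * negEnt μstar) := by
  simp only [klDiv', negEnt]
  haveI := hμ.1
  haveI := hμstar.1
  set f : EuclideanSpace ℝ (Fin d) → ℝ := fun x => Real.exp (-(1 / lam) * δF μstar x) / Z with hf
  set g : EuclideanSpace ℝ (Fin d) → ENNReal := fun x => ENNReal.ofReal (f x) with hg
  have hfpos : ∀ x, 0 < f x := fun x => div_pos (Real.exp_pos _) hZpos
  -- integrability of exp w.r.t. volume, from Z ≠ 0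
  have hIntExp : Integrable (fun x => Real.exp (-(1 / lam) * δF μstar x)) volume := by
    by_contra h
    rw [integral_undef h] at hZ
    exact hZpos.ne' hZ
  have hgmeas : AEMeasurable g volume :=
    ENNReal.measurable_ofReal.comp_aemeasurable (hIntExp.aemeasurable.div_const Z)
  have hstar_rn : μstar.rnDeriv volume =ᵐ[volume] g := by
    rw [hfoc]; exact Measure.rnDeriv_withDensity₀ volume hgmeas
  have hvol_ac : volume ≪ μstar := by
    rw [hfoc]
    exact withDensity_absolutelyContinuous' hgmeas
      (Filter.Eventually.of_forall fun x => (ENNReal.ofReal_pos.mpr (hfpos x)).ne')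
  have hμμstar : μ ≪ μstar := hacμ.trans hvol_ac
  have hstar_ac : μstar ≪ volume := by rw [hfoc]; exact withDensity_absolutelyContinuous _ _
  have hchain : μ.rnDeriv μstar * μstar.rnDeriv volume =ᵐ[volume] μ.rnDeriv volume :=
    Measure.rnDeriv_mul_rnDeriv hμμstar
  have hlogf : ∀ x, Real.log (f x) = -(1 / lam) * δF μstar x - Real.log Z := by
    intro x
    rw [hf, Real.log_div (Real.exp_ne_zero _) hZpos.ne', Real.log_exp]
  -- μ-a.e. identity for the KL integrand
  have hae : ∀ᵐ x ∂μ, Real.log (μ.rnDeriv μstar x).toReal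
      = Real.log (μ.rnDeriv volume x).toReal - (-(1 / lam) * δF μstar x - Real.log Z) := by
    filter_upwards [Measure.rnDeriv_pos hacμ, hacμ.ae_le (Measure.rnDeriv_lt_top μ volume),
      hacμ.ae_le hstar_rn, hacμ.ae_le hchain] with x hpos hfin hsr hch
    have hg0 : g x ≠ 0 := (ENNReal.ofReal_pos.mpr (hfpos x)).ne'
    have hgtop : g x ≠ ⊤ := ENNReal.ofReal_ne_top
    have hch' : μ.rnDeriv μstar x * g x = μ.rnDeriv volume x := by
      rw [← hsr]; exact hch
    have hr0 : μ.rnDeriv μstar x ≠ 0 := by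
      intro h0; rw [h0, zero_mul] at hch'; exact hpos.ne hch'
    have hrtop : μ.rnDeriv μstar x ≠ ⊤ := by
      intro ht; rw [ht, ENNReal.top_mul hg0] at hch'; exact hfin.ne hch'.symm
    have htr : (μ.rnDeriv volume x).toReal = (μ.rnDeriv μstar x).toReal * f x := by
      rw [← hch', ENNReal.toReal_mul, hg, ENNReal.toReal_ofReal (hfpos x).le]
    rw [htr, Real.log_mul (by simp [ENNReal.toReal_eq_zero_iff, hr0, hrtop]) (hfpos x).ne',
      hlogf]
    ring
  -- μstar-a.e. identity for its entropy integrand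
  have haestar : ∀ᵐ x ∂μstar, Real.log (μstar.rnDeriv volume x).toReal
      = -(1 / lam) * δF μstar x - Real.log Z := by
    filter_upwards [hstar_ac.ae_le hstar_rn] with x hsr
    rw [hsr, hg, ENNReal.toReal_ofReal (hfpos x).le, hlogf]
  have hIntAff : Integrable (fun x => -(1 / lam) * δF μstar x - Real.log Z) μ :=
    (hδFint.const_mul _).sub (integrable_const _)
  have hIntAffStar : Integrable (fun x => -(1 / lam) * δF μstar x - Real.log Z) μstar :=
    (hδFintstar.const_mul _).sub (integrable_const _)
  have hA : ∫ x, Real.log (μ.rnDeriv μstar x).toReal ∂μ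
      = ∫ x, Real.log (μ.rnDeriv volume x).toReal ∂μ
        - (-(1 / lam) * ∫ x, δF μstar x ∂μ - Real.log Z) := by
    rw [integral_congr_ae hae, integral_sub hEntμ hIntAff, integral_sub (hδFint.const_mul _)
      (integrable_const _), integral_const_mul, integral_const, probReal_univ]
    simp
  have hB : ∫ x, Real.log (μstar.rnDeriv volume x).toReal ∂μstar
      = -(1 / lam) * ∫ x, δF μstar x ∂μstar - Real.log Z := by
    rw [integral_congr_ae haestar, integral_sub (hδFintstar.const_mul _) (integrable_const _),
      integral_const_mul, integral_const, probReal_univ]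
    simp
  have hc := hconv μstar μ hμstar hμ
  rw [hA, hB]
  have e1 : lam * (-(1 / lam) * (∫ x, δF μstar x ∂μ) - Real.log Z)
      = -(∫ x, δF μstar x ∂μ) - lam * Real.log Z := by
    field_simp
  have e2 : lam * (-(1 / lam) * (∫ x, δF μstar x ∂μstar) - Real.log Z)
      = -(∫ x, δF μstar x ∂μstar) - lam * Real.log Z := by
    field_simp
  rw [mul_sub, e1, e2]
  linarith [hc]
end

section
/- Let (x_k) be a sequence in ℝ^d generated by x_{k+1} = (1 − 2ηλ') x_k − η g_k + √(2λη) ξ_k, where 0 < ηλ' < 1/2, λ, λ' > 0, ‖g_k‖₂ ≤ M₁ almost surely, and ξ_k are i.i.d. standard Gaussians in ℝ^d independent of the past. Then for all k, E[‖x_k‖₂²] ≤ (1 − 2ηλ')^k E[‖x_0‖₂²] + (1/λ')(M₁²/(4λ') + λ d); in particular E[‖x_k‖₂²] ≤ E[‖x_0‖₂²] + (1/λ')(M₁²/(4λ') + λ d). -/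
open MeasureTheory ProbabilityTheory Real Set

/-- The standard Gaussian measure `N(0, I_d)` on `ℝ^d`. -/
noncomputable def stdGaussian (d : ℕ) : Measure (EuclideanSpace ℝ (Fin d)) :=
  (Measure.pi fun _ : Fin d => gaussianReal 0 1).map
    (EuclideanSpace.equiv (Fin d) ℝ).symm

lemma gauss_pdf01 (x : ℝ) : gaussianPDFReal 0 1 x = (Real.sqrt (2*π))⁻¹ * Real.exp (-(1/2) * x^2) := by
  rw [gaussianPDFReal_def]
  norm_num
  left; ring

lemma integral_gaussianReal01 {E : Type*} [NormedAddCommGroup E] [NormedSpace ℝ E]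
    (f : ℝ → E) :
    ∫ x, f x ∂(gaussianReal 0 1) = ∫ x, gaussianPDFReal 0 1 x • f x := by
  rw [gaussianReal_of_var_ne_zero 0 one_ne_zero]
  have : (gaussianPDF 0 1) = fun x => ((gaussianPDFReal 0 1 x).toNNReal : ENNReal) := by
    funext x; rfl
  rw [this, integral_withDensity_eq_integral_smul ((measurable_gaussianPDFReal 0 1).real_toNNReal) f]
  congr 1; funext x
  rw [NNReal.smul_def, Real.coe_toNNReal _ (gaussianPDFReal_nonneg 0 1 x)]

lemma exp_form (x : ℝ) : x ^ (2:ℝ) = x ^ 2 := by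
  rw [show (2:ℝ) = ((2:ℕ):ℝ) by norm_num, Real.rpow_natCast]

lemma integral_sq_exp_Ioi :
    ∫ x in Ioi (0:ℝ), x ^ 2 * Real.exp (-(1/2) * x ^ 2) = Real.sqrt (2*π) / 2 := by
  have h := integral_rpow_mul_exp_neg_mul_rpow (p := 2) (q := 2) (b := 1/2)
    (by norm_num) (by norm_num) (by norm_num)
  have he : (fun x : ℝ => x ^ (2:ℝ) * Real.exp (-(1/2) * x ^ (2:ℝ)))
      = fun x : ℝ => x ^ 2 * Real.exp (-(1/2) * x ^ 2) := by
    funext x; rw [exp_form]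
  rw [← setIntegral_congr_fun measurableSet_Ioi (fun x _ => congrFun he x)] at *
  rw [h]
  have h32 : ((2:ℝ) + 1) / 2 = 1/2 + 1 := by norm_num
  rw [h32, Real.Gamma_add_one (by norm_num), Real.Gamma_one_half_eq]
  have : ((1:ℝ)/2) ^ (-((2:ℝ)+1)/2) = 2 * Real.sqrt 2 := by
    rw [show ((1:ℝ)/2) = 2⁻¹ by norm_num, Real.inv_rpow (by norm_num),
      ← Real.rpow_neg (by norm_num), show (-(-((2:ℝ)+1)/2)) = 1 + 1/2 by norm_num,
      Real.rpow_add (by norm_num), Real.rpow_one, ← Real.sqrt_eq_rpow]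
  rw [this, Real.sqrt_mul (by norm_num)]
  ring

lemma integral_sq_exp_real :
    ∫ x : ℝ, x ^ 2 * Real.exp (-(1/2) * x ^ 2) = Real.sqrt (2*π) := by
  have h := integral_comp_abs (f := fun x : ℝ => x ^ 2 * Real.exp (-(1/2) * x ^ 2))
  have he : (fun x : ℝ => |x| ^ 2 * Real.exp (-(1/2) * |x| ^ 2))
      = fun x : ℝ => x ^ 2 * Real.exp (-(1/2) * x ^ 2) := by
    funext x; rw [sq_abs]
  rw [he] at h
  rw [h, integral_sq_exp_Ioi]
  ring

lemma integrable_sq_exp :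
    Integrable (fun x : ℝ => x ^ 2 * Real.exp (-(1/2) * x ^ 2)) := by
  have h := integrable_rpow_mul_exp_neg_mul_sq (b := 1/2) (by norm_num) (s := 2) (by norm_num)
  refine h.congr ?_
  filter_upwards with x
  rw [exp_form]

lemma integrable_sq_gaussianReal : Integrable (fun x : ℝ => x ^ 2) (gaussianReal 0 1) := by
  rw [gaussianReal_of_var_ne_zero 0 one_ne_zero,
    show (gaussianPDF 0 1) = fun x => ((gaussianPDFReal 0 1 x).toNNReal : ENNReal) from rfl,
    integrable_withDensity_iff_integrable_smul ((measurable_gaussianPDFReal 0 1).real_toNNReal)]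
  refine (integrable_sq_exp.const_mul ((Real.sqrt (2*π))⁻¹)).congr ?_
  filter_upwards with x
  rw [NNReal.smul_def, Real.coe_toNNReal _ (gaussianPDFReal_nonneg 0 1 x), smul_eq_mul, gauss_pdf01]
  ring

lemma integral_sq_gaussianReal : ∫ x, x ^ 2 ∂(gaussianReal 0 1) = 1 := by
  rw [integral_gaussianReal01 (fun x => x ^ 2)]
  have : (fun x : ℝ => gaussianPDFReal 0 1 x • x ^ 2)
      = fun x : ℝ => (Real.sqrt (2*π))⁻¹ * (x ^ 2 * Real.exp (-(1/2) * x ^ 2)) := by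
    funext x; rw [smul_eq_mul, gauss_pdf01]; ring
  rw [this, integral_const_mul, integral_sq_exp_real, inv_mul_cancel₀]
  positivity

lemma integrable_id_exp :
    Integrable (fun x : ℝ => x * Real.exp (-(1/2) * x ^ 2)) :=
  integrable_mul_exp_neg_mul_sq (by norm_num)

lemma integral_id_exp_real : ∫ x : ℝ, x * Real.exp (-(1/2) * x ^ 2) = 0 := by
  have hI := intervalIntegral.integral_Iic_add_Ioi (b := (0:ℝ)) (μ := volume)
    integrable_id_exp.integrableOn integrable_id_exp.integrableOn
  have hneg := integral_comp_neg_Ioi (0:ℝ) (fun x => x * Real.exp (-(1/2) * x ^ 2))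
  have he : (fun x : ℝ => (-x) * Real.exp (-(1/2) * (-x) ^ 2))
      = fun x : ℝ => -(x * Real.exp (-(1/2) * x ^ 2)) := by
    funext x; ring_nf
  rw [neg_zero] at hneg
  rw [← hneg] at hI
  rw [setIntegral_congr_fun measurableSet_Ioi (fun x _ => congrFun he x),
    integral_neg, neg_add_cancel] at hI
  exact hI.symm

lemma integrable_id_gaussianReal : Integrable (fun x : ℝ => x) (gaussianReal 0 1) := by
  rw [gaussianReal_of_var_ne_zero 0 one_ne_zero,
    show (gaussianPDF 0 1) = fun x => ((gaussianPDFReal 0 1 x).toNNReal : ENNReal) from rfl,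
    integrable_withDensity_iff_integrable_smul ((measurable_gaussianPDFReal 0 1).real_toNNReal)]
  refine (integrable_id_exp.const_mul ((Real.sqrt (2*π))⁻¹)).congr ?_
  filter_upwards with x
  rw [NNReal.smul_def, Real.coe_toNNReal _ (gaussianPDFReal_nonneg 0 1 x), smul_eq_mul, gauss_pdf01]
  ring

lemma integral_id_gaussianReal01 : ∫ x, x ∂(gaussianReal 0 1) = 0 := by
  rw [integral_gaussianReal01 (fun x => x)]
  have : (fun x : ℝ => gaussianPDFReal 0 1 x • x)
      = fun x : ℝ => (Real.sqrt (2*π))⁻¹ * (x * Real.exp (-(1/2) * x ^ 2)) := by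
    funext x; rw [smul_eq_mul, gauss_pdf01]; ring
  rw [this, integral_const_mul, integral_id_exp_real, mul_zero]

lemma map_eval_pi {ι : Type*} [Fintype ι] [DecidableEq ι] {α : ι → Type*}
    [∀ i, MeasurableSpace (α i)]
    (μ : ∀ i, Measure (α i)) [∀ i, IsProbabilityMeasure (μ i)] (i : ι) :
    Measure.map (fun u => u i) (Measure.pi μ) = μ i := by
  ext s hs
  rw [Measure.map_apply (measurable_pi_apply i) hs]
  have hpre : (fun u : ∀ j, α j => u i) ⁻¹' s
      = Set.pi Set.univ (Function.update (fun j => (Set.univ : Set (α j))) i s) := by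
    ext u
    simp only [Set.mem_preimage, Set.mem_univ_pi]
    constructor
    · intro hu j
      rcases eq_or_ne j i with h | h
      · subst h; simpa using hu
      · simp [Function.update_of_ne h]
    · intro hu
      simpa using hu i
  rw [hpre, Measure.pi_pi]
  rw [Finset.prod_eq_single i]
  · simp
  · intro j _ hj
    simp [Function.update_of_ne hj]
  · intro h; exact absurd (Finset.mem_univ i) h

lemma measurable_esymm (d : ℕ) :
    Measurable ⇑(EuclideanSpace.equiv (Fin d) ℝ).symm :=
  (EuclideanSpace.equiv (Fin d) ℝ).symm.continuous.measurable

lemma measurable_coord (d : ℕ) (i : Fin d) :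
    Measurable (fun v : EuclideanSpace ℝ (Fin d) => v i) :=
  (measurable_pi_apply i).comp (WithLp.measurable_ofLp 2 _)

instance stdGaussian_prob (d : ℕ) : IsProbabilityMeasure (stdGaussian d) := by
  unfold _root_.stdGaussian
  exact Measure.isProbabilityMeasure_map (measurable_esymm d).aemeasurable

lemma map_coord_stdGaussian (d : ℕ) (i : Fin d) :
    Measure.map (fun v : EuclideanSpace ℝ (Fin d) => v i) (stdGaussian d)
      = gaussianReal 0 1 := by
  unfold _root_.stdGaussian
  rw [Measure.map_map (measurable_coord d i) (measurable_esymm d)]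
  have : ((fun v : EuclideanSpace ℝ (Fin d) => v i) ∘ ⇑(EuclideanSpace.equiv (Fin d) ℝ).symm)
      = fun u : Fin d → ℝ => u i := rfl
  rw [this, map_eval_pi]

lemma integral_coord_stdGaussian (d : ℕ) (i : Fin d) :
    ∫ v, v i ∂(stdGaussian d) = 0 := by
  have h : ∫ x, x ∂(Measure.map (fun v : EuclideanSpace ℝ (Fin d) => v i) (stdGaussian d))
      = ∫ v, v i ∂(stdGaussian d) :=
    integral_map (measurable_coord d i).aemeasurable aestronglyMeasurable_id
  rw [← h, map_coord_stdGaussian, integral_id_gaussianReal01]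

lemma integrable_coord_sq_stdGaussian (d : ℕ) (i : Fin d) :
    Integrable (fun v : EuclideanSpace ℝ (Fin d) => (v i) ^ 2) (stdGaussian d) := by
  have h := (integrable_map_measure (f := fun v : EuclideanSpace ℝ (Fin d) => v i)
    (g := fun x : ℝ => x ^ 2)
    (by rw [map_coord_stdGaussian]; exact integrable_sq_gaussianReal.aestronglyMeasurable)
    (measurable_coord d i).aemeasurable).mp
  have := h (by rw [map_coord_stdGaussian]; exact integrable_sq_gaussianReal)
  exact this

lemma integral_coord_sq_stdGaussian (d : ℕ) (i : Fin d) :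
    ∫ v, (v i) ^ 2 ∂(stdGaussian d) = 1 := by
  have h : ∫ x, x ^ 2 ∂(Measure.map (fun v : EuclideanSpace ℝ (Fin d) => v i) (stdGaussian d))
      = ∫ v, (v i) ^ 2 ∂(stdGaussian d) :=
    integral_map (measurable_coord d i).aemeasurable
      (by rw [map_coord_stdGaussian]; exact integrable_sq_gaussianReal.aestronglyMeasurable)
  rw [← h, map_coord_stdGaussian, integral_sq_gaussianReal]

lemma norm_sq_eq_sum_coord (d : ℕ) (v : EuclideanSpace ℝ (Fin d)) :
    ‖v‖ ^ 2 = ∑ i, (v i) ^ 2 := by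
  rw [EuclideanSpace.norm_eq]
  rw [Real.sq_sqrt (by positivity)]
  congr 1; funext i; rw [Real.norm_eq_abs, sq_abs]

lemma integrable_norm_sq_stdGaussian (d : ℕ) :
    Integrable (fun v : EuclideanSpace ℝ (Fin d) => ‖v‖ ^ 2) (stdGaussian d) := by
  have : (fun v : EuclideanSpace ℝ (Fin d) => ‖v‖ ^ 2)
      = fun v => ∑ i, (v i) ^ 2 := by funext v; exact norm_sq_eq_sum_coord d v
  rw [this]
  exact integrable_finset_sum _ (fun i _ => integrable_coord_sq_stdGaussian d i)

lemma integral_norm_sq_stdGaussian (d : ℕ) :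
    ∫ v, ‖v‖ ^ 2 ∂(stdGaussian d) = d := by
  have : (fun v : EuclideanSpace ℝ (Fin d) => ‖v‖ ^ 2)
      = fun v => ∑ i, (v i) ^ 2 := by funext v; exact norm_sq_eq_sum_coord d v
  rw [this, integral_finset_sum _ (fun i _ => integrable_coord_sq_stdGaussian d i)]
  simp [integral_coord_sq_stdGaussian]

lemma memLp_id_stdGaussian (d : ℕ) :
    MemLp (id : EuclideanSpace ℝ (Fin d) → EuclideanSpace ℝ (Fin d)) 2 (stdGaussian d) := by
  rw [memLp_two_iff_integrable_sq_norm aestronglyMeasurable_id]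
  exact integrable_norm_sq_stdGaussian d

lemma abs_coord_le_norm (d : ℕ) (v : EuclideanSpace ℝ (Fin d)) (i : Fin d) :
    |v i| ≤ ‖v‖ := by
  have h : (v i) ^ 2 ≤ ‖v‖ ^ 2 := by
    rw [norm_sq_eq_sum_coord d v]
    exact Finset.single_le_sum (fun j _ => sq_nonneg (v j)) (Finset.mem_univ i)
  calc |v i| = Real.sqrt ((v i) ^ 2) := (Real.sqrt_sq_eq_abs _).symm
  _ ≤ Real.sqrt (‖v‖ ^ 2) := Real.sqrt_le_sqrt h
  _ = ‖v‖ := Real.sqrt_sq (norm_nonneg v)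

lemma drift_sq_bound {η lam' u M : ℝ} (hη : 0 < η) (hlam' : 0 < lam')
    (hs : 2 * η * lam' ≤ 1) :
    ((1 - 2 * η * lam') * u + η * M) ^ 2
      ≤ (1 - 2 * η * lam') * u ^ 2 + η * M ^ 2 / (2 * lam') := by
  have hc : 0 < 2 * η * lam' := by positivity
  have key : (1 - 2*η*lam') * u^2 + η * M^2/(2*lam') - ((1 - 2*η*lam') * u + η * M)^2
      = (1 - 2*η*lam') * (2*η*lam'*u - η*M)^2 / (2*η*lam') := by
    field_simp
    ring
  nlinarith [div_nonneg (mul_nonneg (by linarith : (0:ℝ) ≤ 1 - 2*η*lam')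
    (sq_nonneg (2*η*lam'*u - η*M))) hc.le]

/-- Uniform-in-time second-moment bound for noisy gradient descent with weight decay. -/
theorem stmt9 {d : ℕ} {Ω : Type*} [MeasurableSpace Ω]
    (P : Measure Ω) [IsProbabilityMeasure P]
    (η lam lam' M₁ : ℝ) (hη : 0 < η * lam') (hηs : η * lam' < 1 / 2)
    (hlam : 0 < lam) (hlam' : 0 < lam')
    (x g : ℕ → Ω → EuclideanSpace ℝ (Fin d))
    (ξ : ℕ → Ω → EuclideanSpace ℝ (Fin d))
    (hxmeas : ∀ k, Measurable (x k)) (hgmeas : ∀ k, Measurable (g k))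
    (hξmeas : ∀ k, Measurable (ξ k))
    (hgbdd : ∀ k, ∀ᵐ ω ∂P, ‖g k ω‖ ≤ M₁)
    (hξlaw : ∀ k, Measure.map (ξ k) P = stdGaussian d)
    (hξindep : ∀ k, IndepFun (fun ω => (x k ω, g k ω)) (ξ k) P)
    (hrec : ∀ k, ∀ ω, x (k + 1) ω =
      (1 - 2 * η * lam') • x k ω - η • g k ω + Real.sqrt (2 * lam * η) • ξ k ω)
    (hx0 : MemLp (x 0) 2 P) :
    ∀ k : ℕ,
      (∫ ω, ‖x k ω‖ ^ 2 ∂P ≤ (1 - 2 * η * lam') ^ k * ∫ ω, ‖x 0 ω‖ ^ 2 ∂P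
        + (1 / lam') * (M₁ ^ 2 / (4 * lam') + lam * d)) ∧
      (∫ ω, ‖x k ω‖ ^ 2 ∂P ≤ ∫ ω, ‖x 0 ω‖ ^ 2 ∂P
        + (1 / lam') * (M₁ ^ 2 / (4 * lam') + lam * d)) := by
  have hηpos : 0 < η := by nlinarith
  set a : ℝ := 1 - 2 * η * lam' with ha
  set s : ℝ := Real.sqrt (2 * lam * η) with hsdef
  set C : ℝ := (1 / lam') * (M₁ ^ 2 / (4 * lam') + lam * d) with hC
  have ha0 : 0 ≤ a := by rw [ha]; linarith
  have ha1 : a ≤ 1 := by rw [ha]; linarith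
  have hs2 : s ^ 2 = 2 * lam * η := Real.sq_sqrt (by positivity)
  have hC0 : 0 ≤ C := by rw [hC]; positivity
  have hM : 0 ≤ M₁ := by
    obtain ⟨ω, hω⟩ := (hgbdd 0).exists
    exact le_trans (norm_nonneg _) hω
  -- second moments of the noise
  have hξL2 : ∀ k, MemLp (ξ k) 2 P := by
    intro k
    have h : MemLp id 2 (Measure.map (ξ k) P) := by
      rw [hξlaw k]; exact memLp_id_stdGaussian d
    exact (memLp_map_measure_iff aestronglyMeasurable_id (hξmeas k).aemeasurable).mp h
  have hξsqint : ∀ k, Integrable (fun ω => ‖ξ k ω‖ ^ 2) P := fun k =>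
    (memLp_two_iff_integrable_sq_norm (hξL2 k).aestronglyMeasurable).mp (hξL2 k)
  have hξsq : ∀ k, ∫ ω, ‖ξ k ω‖ ^ 2 ∂P = d := by
    intro k
    have h : ∫ v, ‖v‖ ^ 2 ∂(Measure.map (ξ k) P) = ∫ ω, ‖ξ k ω‖ ^ 2 ∂P :=
      integral_map (hξmeas k).aemeasurable
        (by rw [hξlaw k]; exact (integrable_norm_sq_stdGaussian d).aestronglyMeasurable)
    rw [← h, hξlaw k, integral_norm_sq_stdGaussian]
  have hξmean : ∀ k, ∀ i : Fin d, ∫ ω, ξ k ω i ∂P = 0 := by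
    intro k i
    have h : ∫ v, v i ∂(Measure.map (ξ k) P) = ∫ ω, ξ k ω i ∂P :=
      integral_map (hξmeas k).aemeasurable
        (by rw [hξlaw k]; exact (measurable_coord d i).aestronglyMeasurable)
    rw [← h, hξlaw k, integral_coord_stdGaussian]
  have hξiInt : ∀ k, ∀ i : Fin d, Integrable (fun ω => ξ k ω i) P := by
    intro k i
    refine (((hξL2 k).integrable one_le_two).norm).mono'
      (((measurable_coord d i).comp (hξmeas k)).aestronglyMeasurable) ?_
    filter_upwards with ω
    simpa [Real.norm_eq_abs] using abs_coord_le_norm d (ξ k ω) i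
  -- key one-step estimate
  have key : ∀ k, MemLp (x k) 2 P → MemLp (x (k + 1)) 2 P ∧
      ∫ ω, ‖x (k + 1) ω‖ ^ 2 ∂P ≤ a * ∫ ω, ‖x k ω‖ ^ 2 ∂P + 2 * η * lam' * C := by
    intro k hk
    set Y : Ω → EuclideanSpace ℝ (Fin d) := fun ω => a • x k ω - η • g k ω with hYdef
    have hgL2 : MemLp (g k) 2 P := MemLp.of_bound (hgmeas k).aestronglyMeasurable M₁ (hgbdd k)
    have hYL2 : MemLp Y 2 P := (hk.const_smul a).sub (hgL2.const_smul η)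
    have hYmeas : Measurable Y := ((hxmeas k).const_smul a).sub ((hgmeas k).const_smul η)
    have hxk1 : x (k + 1) = fun ω => Y ω + s • ξ k ω := funext fun ω => hrec k ω
    have hx1L2 : MemLp (x (k + 1)) 2 P := by
      rw [hxk1]; exact hYL2.add ((hξL2 k).const_smul s)
    have hYsq : Integrable (fun ω => ‖Y ω‖ ^ 2) P :=
      (memLp_two_iff_integrable_sq_norm hYL2.aestronglyMeasurable).mp hYL2
    have hxsq : Integrable (fun ω => ‖x k ω‖ ^ 2) P :=
      (memLp_two_iff_integrable_sq_norm hk.aestronglyMeasurable).mp hk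
    -- cross term
    have hYiInt : ∀ i : Fin d, Integrable (fun ω => Y ω i) P := by
      intro i
      refine ((hYL2.integrable one_le_two).norm).mono'
        (((measurable_coord d i).comp hYmeas).aestronglyMeasurable) ?_
      filter_upwards with ω
      simpa [Real.norm_eq_abs] using abs_coord_le_norm d (Y ω) i
    have hind : ∀ i : Fin d, IndepFun (fun ω => Y ω i) (fun ω => ξ k ω i) P := by
      intro i
      have hφ : Measurable (fun p : EuclideanSpace ℝ (Fin d) × EuclideanSpace ℝ (Fin d) =>
          (a • p.1 - η • p.2) i) :=
        (measurable_coord d i).comp ((measurable_fst.const_smul a).sub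
          (measurable_snd.const_smul η))
      exact (hξindep k).comp hφ (measurable_coord d i)
    have hprodInt : ∀ i : Fin d, Integrable (fun ω => Y ω i * ξ k ω i) P := fun i =>
      (hind i).integrable_mul (hYiInt i) (hξiInt k i)
    have hcross_i : ∀ i : Fin d, ∫ ω, Y ω i * ξ k ω i ∂P = 0 := by
      intro i
      have h := (hind i).integral_fun_mul_eq_mul_integral
        (((measurable_coord d i).comp hYmeas).aestronglyMeasurable)
        (((measurable_coord d i).comp (hξmeas k)).aestronglyMeasurable)
      calc ∫ ω, Y ω i * ξ k ω i ∂P = (∫ ω, Y ω i ∂P) * ∫ ω, ξ k ω i ∂P := h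
      _ = 0 := by rw [hξmean k i, mul_zero]
    have hinner_eq : (fun ω => (inner ℝ (Y ω) (ξ k ω) : ℝ)) = fun ω => ∑ i, Y ω i * ξ k ω i := by
      funext ω
      rw [PiLp.inner_apply]
      simp [RCLike.inner_apply, conj_trivial, mul_comm]
    have hinnerInt : Integrable (fun ω => (inner ℝ (Y ω) (ξ k ω) : ℝ)) P := by
      rw [hinner_eq]; exact integrable_finset_sum _ fun i _ => hprodInt i
    have hinner0 : ∫ ω, (inner ℝ (Y ω) (ξ k ω) : ℝ) ∂P = 0 := by
      rw [hinner_eq, integral_finset_sum _ fun i _ => hprodInt i]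
      simp [hcross_i]
    -- expansion of the square
    have hexpand : (fun ω => ‖x (k + 1) ω‖ ^ 2) = fun ω =>
        ‖Y ω‖ ^ 2 + (2 * s) * (inner ℝ (Y ω) (ξ k ω) : ℝ) + s ^ 2 * ‖ξ k ω‖ ^ 2 := by
      funext ω
      simp only [hxk1]
      rw [norm_add_sq_real]
      rw [real_inner_smul_right, norm_smul, Real.norm_eq_abs, mul_pow, sq_abs]
      ring
    have hIeq : ∫ ω, ‖x (k + 1) ω‖ ^ 2 ∂P
        = ∫ ω, ‖Y ω‖ ^ 2 ∂P + s ^ 2 * (d : ℝ) := by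
      have hInt1 : Integrable (fun ω => ‖Y ω‖ ^ 2
          + 2 * s * (inner ℝ (Y ω) (ξ k ω) : ℝ)) P := hYsq.add (hinnerInt.const_mul (2 * s))
      have hInt2 : Integrable (fun ω => s ^ 2 * ‖ξ k ω‖ ^ 2) P := (hξsqint k).const_mul (s ^ 2)
      rw [hexpand, integral_add hInt1 hInt2, integral_add hYsq (hinnerInt.const_mul (2 * s)),
        integral_const_mul, integral_const_mul, hinner0, hξsq k]
      ring
    -- drift bound
    have hptwise : ∀ᵐ ω ∂P, ‖Y ω‖ ^ 2 ≤ a * ‖x k ω‖ ^ 2 + η * M₁ ^ 2 / (2 * lam') := by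
      filter_upwards [hgbdd k] with ω hω
      have h1 : ‖Y ω‖ ≤ a * ‖x k ω‖ + η * M₁ := by
        calc ‖Y ω‖ ≤ ‖a • x k ω‖ + ‖η • g k ω‖ := norm_sub_le _ _
        _ = |a| * ‖x k ω‖ + |η| * ‖g k ω‖ := by rw [norm_smul, norm_smul]; simp
        _ = a * ‖x k ω‖ + η * ‖g k ω‖ := by
            rw [abs_of_nonneg ha0, abs_of_nonneg hηpos.le]
        _ ≤ a * ‖x k ω‖ + η * M₁ := by
            have := mul_le_mul_of_nonneg_left hω hηpos.le
            linarith
      have h2 : ‖Y ω‖ ^ 2 ≤ (a * ‖x k ω‖ + η * M₁) ^ 2 :=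
        pow_le_pow_left₀ (norm_nonneg _) h1 2
      have h3 : (a * ‖x k ω‖ + η * M₁) ^ 2 ≤ a * ‖x k ω‖ ^ 2 + η * M₁ ^ 2 / (2 * lam') := by
        rw [ha]
        exact drift_sq_bound hηpos hlam' (by linarith)
      exact h2.trans h3
    have hdrift : ∫ ω, ‖Y ω‖ ^ 2 ∂P
        ≤ a * ∫ ω, ‖x k ω‖ ^ 2 ∂P + η * M₁ ^ 2 / (2 * lam') := by
      have hInt3 : Integrable (fun ω => a * ‖x k ω‖ ^ 2
          + η * M₁ ^ 2 / (2 * lam')) P := (hxsq.const_mul a).add (integrable_const _)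
      calc ∫ ω, ‖Y ω‖ ^ 2 ∂P
          ≤ ∫ ω, a * ‖x k ω‖ ^ 2 + η * M₁ ^ 2 / (2 * lam') ∂P :=
            integral_mono_ae hYsq hInt3 hptwise
        _ = a * ∫ ω, ‖x k ω‖ ^ 2 ∂P + η * M₁ ^ 2 / (2 * lam') := by
            rw [integral_add (hxsq.const_mul a) (integrable_const _), integral_const_mul,
              integral_const]
            simp
    refine ⟨hx1L2, ?_⟩
    have hconst : η * M₁ ^ 2 / (2 * lam') + s ^ 2 * (d : ℝ) = 2 * η * lam' * C := by
      rw [hs2, hC]; field_simp; ring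
    rw [hIeq]
    calc ∫ ω, ‖Y ω‖ ^ 2 ∂P + s ^ 2 * (d : ℝ)
        ≤ (a * ∫ ω, ‖x k ω‖ ^ 2 ∂P + η * M₁ ^ 2 / (2 * lam')) + s ^ 2 * (d : ℝ) := by
          exact add_le_add_left hdrift _
      _ = a * ∫ ω, ‖x k ω‖ ^ 2 ∂P + 2 * η * lam' * C := by rw [add_assoc, hconst]
  -- induction
  have main : ∀ k, MemLp (x k) 2 P ∧
      ∫ ω, ‖x k ω‖ ^ 2 ∂P ≤ a ^ k * ∫ ω, ‖x 0 ω‖ ^ 2 ∂P + (1 - a ^ k) * C := by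
    intro k
    induction k with
    | zero => exact ⟨hx0, by simp⟩
    | succ n ih =>
      obtain ⟨hL2, hIH⟩ := ih
      obtain ⟨hL2', hstep⟩ := key n hL2
      refine ⟨hL2', ?_⟩
      have h2 : a * ∫ ω, ‖x n ω‖ ^ 2 ∂P
          ≤ a * (a ^ n * ∫ ω, ‖x 0 ω‖ ^ 2 ∂P + (1 - a ^ n) * C) :=
        mul_le_mul_of_nonneg_left hIH ha0
      have hps : a ^ (n + 1) = a * a ^ n := by ring
      have hfin : a * (a ^ n * ∫ ω, ‖x 0 ω‖ ^ 2 ∂P + (1 - a ^ n) * C) + 2 * η * lam' * C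
          = a ^ (n + 1) * ∫ ω, ‖x 0 ω‖ ^ 2 ∂P + (1 - a ^ (n + 1)) * C := by
        rw [hps, ha]; ring
      linarith
  intro k
  obtain ⟨-, h⟩ := main k
  have hpow0 : 0 ≤ a ^ k := pow_nonneg ha0 k
  have hpow1 : a ^ k ≤ 1 := pow_le_one₀ ha0 ha1
  have hI0 : 0 ≤ ∫ ω, ‖x 0 ω‖ ^ 2 ∂P := integral_nonneg fun ω => by positivity
  constructor
  · nlinarith
  · nlinarith
end

section
/- Assume F₀ satisfies: ‖∇(δF₀(μ)/δμ)(x) − ∇(δF₀(μ')/δμ)(x')‖₂ ≤ M₂ (W₂(μ,μ') + ‖x−x'‖₂) for all μ, μ', x, x'. Let F(μ) = F₀(μ) + λ'E_μ[‖X‖²] and, for x = (x¹,…,x^N), F(x) = F(μ_x). Then for any y₀, y ∈ (ℝ^d)^N, N² ‖∇F(y₀) − ∇F(y)‖₂² = Σᵢ ‖∇(δF(μ_{y₀})/δμ)(y₀ⁱ) − ∇(δF(μ_y)/δμ)(yⁱ)‖₂² ≤ 8(M₂² + λ'²) Σᵢ ‖y₀ⁱ − yⁱ‖₂², using that W₂²(μ_{y₀},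 μ_y) ≤ (1/N) Σᵢ ‖y₀ⁱ − yⁱ‖₂². -/
open MeasureTheory

/-- Empirical measure `μ_x = (1/N) Σᵢ δ_{xᵢ}`. -/
noncomputable def empMeas {d N : ℕ} (y : Fin N → EuclideanSpace ℝ (Fin d)) :
    Measure (EuclideanSpace ℝ (Fin d)) :=
  ((N : ENNReal)⁻¹) • ∑ i, Measure.dirac (y i)

/-- Lipschitz bound on the `N`-particle gradient: writing
`∇(δF(μ_x)/δμ)(xⁱ) = ∇(δF₀(μ_x)/δμ)(xⁱ) + 2λ'xⁱ`, one has
`Σᵢ ‖∇(δF(μ_{y₀})/δμ)(y₀ⁱ) - ∇(δF(μ_y)/δμ)(yⁱ)‖² ≤ 8(M₂² + λ'²) Σᵢ ‖y₀ⁱ - yⁱ‖²`,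
using `W₂²(μ_{y₀}, μ_y) ≤ (1/N) Σᵢ ‖y₀ⁱ - yⁱ‖²`. -/
theorem stmt17 {d N : ℕ} (hN : 0 < N) (M₂ lam' : ℝ) (hlam' : 0 < lam')
    (W2 : Measure (EuclideanSpace ℝ (Fin d)) → Measure (EuclideanSpace ℝ (Fin d)) → ℝ)
    (hW2nonneg : ∀ μ μ', 0 ≤ W2 μ μ')
    (hW2emp : ∀ y₀ y : Fin N → EuclideanSpace ℝ (Fin d),
      (W2 (empMeas y₀) (empMeas y)) ^ 2 ≤ (1 / (N : ℝ)) * ∑ i, ‖y₀ i - y i‖ ^ 2)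
    (G : Measure (EuclideanSpace ℝ (Fin d)) → EuclideanSpace ℝ (Fin d) →
      EuclideanSpace ℝ (Fin d))  -- `G μ x = ∇(δF₀(μ)/δμ)(x)`
    (hGlip : ∀ μ μ' x x', ‖G μ x - G μ' x'‖ ≤ M₂ * (W2 μ μ' + ‖x - x'‖))
    (y₀ y : Fin N → EuclideanSpace ℝ (Fin d)) :
    ∑ i, ‖(G (empMeas y₀) (y₀ i) + (2 * lam') • y₀ i)
        - (G (empMeas y) (y i) + (2 * lam') • y i)‖ ^ 2
      ≤ 8 * (M₂ ^ 2 + lam' ^ 2) * ∑ i, ‖y₀ i - y i‖ ^ 2 := by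

  set W := W2 (empMeas y₀) (empMeas y) with hW
  have hWn : 0 ≤ W := hW2nonneg _ _
  have hNW : (N : ℝ) * W ^ 2 ≤ ∑ i, ‖y₀ i - y i‖ ^ 2 := by
    have h := hW2emp y₀ y
    have hNpos : (0:ℝ) < N := by exact_mod_cast hN
    rw [div_mul_eq_mul_div, one_mul, le_div_iff₀ hNpos] at h
    linarith [h]
  have key : ∀ i, ‖(G (empMeas y₀) (y₀ i) + (2 * lam') • y₀ i)
        - (G (empMeas y) (y i) + (2 * lam') • y i)‖ ^ 2
      ≤ 4 * M₂ ^ 2 * W ^ 2 + (4 * M₂ ^ 2 + 8 * lam' ^ 2) * ‖y₀ i - y i‖ ^ 2 := by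
    intro i
    set A := G (empMeas y₀) (y₀ i)
    set B := G (empMeas y) (y i)
    have hrw : (A + (2 * lam') • y₀ i) - (B + (2 * lam') • y i)
        = (A - B) + (2 * lam') • (y₀ i - y i) := by
      rw [smul_sub]; abel
    have htri : ‖(A - B) + (2 * lam') • (y₀ i - y i)‖
        ≤ ‖A - B‖ + (2 * lam') * ‖y₀ i - y i‖ := by
      refine (norm_add_le _ _).trans ?_
      rw [norm_smul, Real.norm_eq_abs, abs_of_pos (by linarith)]
    have hG : ‖A - B‖ ≤ M₂ * (W + ‖y₀ i - y i‖) := hGlip _ _ _ _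
    have h1 : (0:ℝ) ≤ ‖A - B‖ := norm_nonneg _
    have h2 : (0:ℝ) ≤ ‖y₀ i - y i‖ := norm_nonneg _
    have h3 : (0:ℝ) ≤ ‖(A - B) + (2 * lam') • (y₀ i - y i)‖ := norm_nonneg _
    rw [hrw]
    nlinarith [sq_nonneg (‖A - B‖ - (2*lam') * ‖y₀ i - y i‖),
      sq_nonneg (M₂ * W - M₂ * ‖y₀ i - y i‖), sq_nonneg (W - ‖y₀ i - y i‖),
      mul_le_mul htri htri h3 (by positivity : (0:ℝ) ≤ ‖A - B‖ + (2*lam') * ‖y₀ i - y i‖),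
      mul_le_mul hG hG h1 (le_trans h1 hG)]
  calc ∑ i, ‖(G (empMeas y₀) (y₀ i) + (2 * lam') • y₀ i)
        - (G (empMeas y) (y i) + (2 * lam') • y i)‖ ^ 2
      ≤ ∑ i, (4 * M₂ ^ 2 * W ^ 2 + (4 * M₂ ^ 2 + 8 * lam' ^ 2) * ‖y₀ i - y i‖ ^ 2) :=
        Finset.sum_le_sum fun i _ => key i
    _ = (N : ℝ) * (4 * M₂ ^ 2 * W ^ 2)
        + (4 * M₂ ^ 2 + 8 * lam' ^ 2) * ∑ i, ‖y₀ i - y i‖ ^ 2 := by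
        rw [Finset.sum_add_distrib, Finset.sum_const, ← Finset.mul_sum]
        simp [Finset.card_univ, mul_comm]
    _ ≤ 8 * (M₂ ^ 2 + lam' ^ 2) * ∑ i, ‖y₀ i - y i‖ ^ 2 := by nlinarith [sq_nonneg M₂]
end
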